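/- Let m < −1, a₀ > 0, A, K, L ≥ 0 and k, l natural numbers. Then there exists a polynomial P with nonnegative coefficients (depending on m, k, l) such that for all a₁ ≥ a₀, ∫_{a₀}^{a₁} max(A,x)^m · (ln₊(K/x))^k · (ln₊(x/L))^l dx ≤ max(A,a₀)^{m+1} · P(ln₊(max(K,A)/max(a₀, min(A,L))), ln₊(a₀/L)). -/

import Mathlib

/-!
Put `B = max(A, a₀)`; for `x ≥ a₀` one has `max(A, x) = max(B, x)`. With `X, Y` the two arguments
of `P`, we have `ln₊(K/B) ≤ X` and `ln₊(B/L) ≤ X + Y` (split `B/L = (B/D)(D/L)` with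
`D = max(a₀, min(A, L))`), so both logarithms in the integrand are at most `X + Y + |ln(x/B)|`.
Hence the integrand is at most `(1 + X + Y)^(k+l) B^m φ(x/B)` with
`φ(t) = max(1,t)^m (1 + |ln t|)^(k+l)` (`logProfile`), and the substitution `x = Bt` bounds the
integral by `B^(m+1) (1 + X + Y)^(k+l) ∫₀^∞ φ`. This last integral is finite because `m < -1`:
the powers of the logarithm are at most a constant times `t^(-1/2)` near `0` and `t^δ` at
infinity, `δ = -(1+m)/2`, which leaves the integrable `t^((m-1)/2)`.
-/

/-- The positive part of the logarithm: `ln₊ x = max (ln x) 0`. -/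
noncomputable def lnp (x : ℝ) : ℝ := max (Real.log x) 0

open Real Set MeasureTheory

namespace MvPolynomial

variable (σ R : Type*) [CommSemiring R] [PartialOrder R] [IsOrderedRing R]

def nonnegCoeffs : Subsemiring (MvPolynomial σ R) where
  carrier := {p | ∀ d, 0 ≤ p.coeff d}
  mul_mem' {p q} hp hq d := by
    classical
    rw [coeff_mul]
    exact Finset.sum_nonneg fun _ _ => mul_nonneg (hp _) (hq _)
  one_mem' d := by
    classical
    rw [coeff_one]
    split_ifs <;> simp
  add_mem' {p q} hp hq d := by
    rw [coeff_add]
    exact add_nonneg (hp d) (hq d)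
  zero_mem' d := by simp

variable {σ R}

theorem C_mem_nonnegCoeffs {c : R} (hc : 0 ≤ c) : C c ∈ nonnegCoeffs σ R := fun d => by
  classical
  rw [coeff_C]
  split_ifs <;> simp [hc]

theorem X_mem_nonnegCoeffs (i : σ) : X i ∈ nonnegCoeffs σ R := fun d => by
  classical
  rw [coeff_X]
  split_ifs <;> simp

end MvPolynomial

theorem lnp_nonneg (x : ℝ) : 0 ≤ lnp x := le_max_right _ _

theorem lnp_le_lnp {u v : ℝ} (hu : 0 ≤ u) (h : u ≤ v) : lnp u ≤ lnp v := by
  rcases hu.eq_or_lt with rfl | hu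
  · simp [lnp]
  · exact max_le_max (log_le_log hu h) le_rfl

theorem lnp_le_of_le_max_one {u v : ℝ} (hu : 0 ≤ u) (h : u ≤ max v 1) : lnp u ≤ lnp v := by
  refine (lnp_le_lnp hu h).trans ?_
  rcases le_total v 1 with hv | hv
  · simp [max_eq_right hv, lnp]
  · rw [max_eq_left hv]

theorem lnp_mul_le (u v : ℝ) : lnp (u * v) ≤ lnp u + lnp v := by
  rcases eq_or_ne u 0 with rfl | hu
  · simp [lnp]
  rcases eq_or_ne v 0 with rfl | hv
  · simp [lnp]
  refine max_le ?_ (add_nonneg (lnp_nonneg _) (lnp_nonneg _))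
  rw [log_mul hu hv]
  exact add_le_add (le_max_left _ _) (le_max_left _ _)

theorem lnp_le_abs_log (u : ℝ) : lnp u ≤ |log u| :=
  max_le (le_abs_self _) (abs_nonneg _)

theorem one_add_log_pow_le_rpow {t c : ℝ} (n : ℕ) (hc : 0 < c) (ht : 1 ≤ t) :
    (1 + log t) ^ n ≤ (1 + n / c) ^ n * t ^ c := by
  rcases n.eq_zero_or_pos with rfl | hn
  · simpa using one_le_rpow ht hc.le
  have hε : 0 < c / n := by positivity
  have htε : 1 ≤ t ^ (c / n) := one_le_rpow ht hε.le
  have hlog : log t ≤ t ^ (c / n) * (n / c) := by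
    simpa [div_div_eq_mul_div, div_eq_mul_inv] using log_le_rpow_div (by linarith) hε
  calc (1 + log t) ^ n ≤ ((1 + n / c) * t ^ (c / n)) ^ n := by
        gcongr
        · linarith [log_nonneg ht]
        · nlinarith [show (0 : ℝ) ≤ n / c by positivity]
    _ = (1 + n / c) ^ n * t ^ c := by
        rw [mul_pow, ← rpow_natCast (t ^ (c / n)), ← rpow_mul (by linarith),
          div_mul_cancel₀ _ (by positivity)]

noncomputable def logProfile (m : ℝ) (n : ℕ) (t : ℝ) : ℝ := max 1 t ^ m * (1 + |log t|) ^ n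

theorem logProfile_nonneg (m : ℝ) (n : ℕ) (t : ℝ) : 0 ≤ logProfile m n t := by
  unfold logProfile; positivity

theorem measurable_logProfile (m : ℝ) (n : ℕ) : Measurable (logProfile m n) := by
  unfold logProfile; fun_prop

theorem integrableOn_logProfile_Ioc (m : ℝ) (n : ℕ) : IntegrableOn (logProfile m n) (Ioc 0 1) := by
  have hint : IntegrableOn (fun t : ℝ => (1 + n / (1 / 2)) ^ n * t ^ (-(1 / 2) : ℝ)) (Ioc 0 1) :=
    ((intervalIntegral.intervalIntegrable_rpow' (by norm_num)).1).const_mul _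
  refine hint.mono' (measurable_logProfile m n).aestronglyMeasurable
    ((ae_restrict_iff' measurableSet_Ioc).2 (ae_of_all _ fun t ht => ?_))
  have ht1 : 1 ≤ t⁻¹ := one_le_inv_iff₀.2 ⟨ht.1, ht.2⟩
  rw [Real.norm_of_nonneg (logProfile_nonneg m n t), logProfile, max_eq_left ht.2, one_rpow,
    one_mul, rpow_neg ht.1.le, ← inv_rpow ht.1.le, abs_of_nonpos (log_nonpos ht.1.le ht.2),
    ← log_inv]
  exact one_add_log_pow_le_rpow n (by norm_num) ht1

theorem integrableOn_logProfile_Ioi_one {m : ℝ} (hm : m < -1) (n : ℕ) :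
    IntegrableOn (logProfile m n) (Ioi 1) := by
  set δ := -(m + 1) / 2
  have hδ : 0 < δ := by simp only [δ]; linarith
  have hint : IntegrableOn (fun t : ℝ => (1 + n / δ) ^ n * t ^ (m + δ)) (Ioi 1) :=
    (integrableOn_Ioi_rpow_of_lt (by simp only [δ]; linarith) one_pos).const_mul _
  refine hint.mono' (measurable_logProfile m n).aestronglyMeasurable
    ((ae_restrict_iff' measurableSet_Ioi).2 (ae_of_all _ fun t ht => ?_))
  have ht : 1 ≤ t := le_of_lt ht
  rw [Real.norm_of_nonneg (logProfile_nonneg m n t), logProfile, max_eq_right ht,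
    abs_of_nonneg (log_nonneg ht), rpow_add (by linarith)]
  calc t ^ m * (1 + log t) ^ n ≤ t ^ m * ((1 + n / δ) ^ n * t ^ δ) := by
        gcongr
        exact one_add_log_pow_le_rpow n hδ ht
    _ = _ := by ring

theorem integrableOn_logProfile {m : ℝ} (hm : m < -1) (n : ℕ) :
    IntegrableOn (logProfile m n) (Ioi 0) := by
  rw [← Ioc_union_Ioi_eq_Ioi zero_le_one]
  exact (integrableOn_logProfile_Ioc m n).union (integrableOn_logProfile_Ioi_one hm n)

theorem integrableOn_logProfile_comp_div {m : ℝ} (hm : m < -1) (n : ℕ) {B : ℝ} (hB : 0 < B) :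
    IntegrableOn (fun x => logProfile m n (x / B)) (Ioi 0) := by
  simp_rw [div_eq_mul_inv]
  exact (integrableOn_Ioi_comp_mul_right_iff _ 0 (inv_pos.2 hB)).2
    (by simpa using integrableOn_logProfile hm n)

theorem integral_logProfile_comp_div (m : ℝ) (n : ℕ) {B : ℝ} (hB : 0 < B) :
    ∫ x in Ioi 0, logProfile m n (x / B) = B * ∫ t in Ioi 0, logProfile m n t := by
  simp_rw [div_eq_mul_inv]
  simp [integral_comp_mul_right_Ioi _ 0 (inv_pos.2 hB)]

theorem max_rpow_mul_lnp_pow_mul_lnp_pow_le (m : ℝ) (k l : ℕ) {K L B S x : ℝ} (hB : 0 < B)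
    (hKB : lnp (K / B) ≤ S) (hBL : lnp (B / L) ≤ S) :
    max B x ^ m * lnp (K / x) ^ k * lnp (x / L) ^ l ≤
      (1 + S) ^ (k + l) * B ^ m * logProfile m (k + l) (x / B) := by
  have hS : 0 ≤ S := (lnp_nonneg _).trans hKB
  set u := |log (x / B)|
  have hu : 0 ≤ u := abs_nonneg _
  have hKx : lnp (K / x) ≤ S + u := by
    rw [← div_mul_div_cancel₀ hB.ne']
    refine (lnp_mul_le _ _).trans (add_le_add hKB ?_)
    simpa only [u, ← inv_div x B, log_inv, abs_neg] using lnp_le_abs_log (B / x)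
  have hxL : lnp (x / L) ≤ S + u := by
    rw [← div_mul_div_cancel₀ hB.ne', add_comm]
    exact (lnp_mul_le _ _).trans (add_le_add (lnp_le_abs_log _) hBL)
  have hSu : S + u ≤ (1 + S) * (1 + u) := by nlinarith
  have hmax : max B x ^ m = B ^ m * max 1 (x / B) ^ m := by
    rw [← mul_rpow hB.le (by positivity), mul_max_of_nonneg _ _ hB.le, mul_one,
      mul_div_cancel₀ _ hB.ne']
  calc max B x ^ m * lnp (K / x) ^ k * lnp (x / L) ^ l
      ≤ max B x ^ m * ((1 + S) * (1 + u)) ^ k * ((1 + S) * (1 + u)) ^ l := by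
        have : 0 ≤ max B x ^ m := rpow_nonneg (hB.le.trans (le_max_left _ _)) _
        gcongr
        exacts [pow_nonneg (lnp_nonneg _) _, lnp_nonneg _, hKx.trans hSu, lnp_nonneg _,
          hxL.trans hSu]
    _ = (1 + S) ^ (k + l) * B ^ m * logProfile m (k + l) (x / B) := by
        rw [hmax, logProfile, mul_pow, mul_pow, pow_add]
        ring

theorem lnp_div_max_le {A K L a₀ : ℝ} (hK : 0 ≤ K) (ha₀ : 0 < a₀) :
    lnp (K / max A a₀) ≤ lnp (max K A / max a₀ (min A L)) := by
  have hD : 0 < max a₀ (min A L) := ha₀.trans_le (le_max_left _ _)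
  refine lnp_le_lnp (div_nonneg hK (ha₀.le.trans (le_max_right _ _))) ?_
  exact div_le_div₀ (hK.trans (le_max_left _ _)) (le_max_left _ _) hD
    (max_le (le_max_right _ _) ((min_le_left _ _).trans (le_max_left _ _)))

theorem lnp_max_div_le {A K L a₀ : ℝ} (hL : 0 < L) (ha₀ : 0 < a₀) :
    lnp (max A a₀ / L) ≤ lnp (max K A / max a₀ (min A L)) + lnp (a₀ / L) := by
  set D := max a₀ (min A L)
  have hD : 0 < D := ha₀.trans_le (le_max_left _ _)
  rw [← div_mul_div_cancel₀ hD.ne']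
  refine (lnp_mul_le _ _).trans (add_le_add ?_ ?_)
  · refine lnp_le_of_le_max_one (by positivity) ?_
    rw [← max_div_div_right hD.le]
    exact max_le_max (by gcongr; exact le_max_right _ _) ((div_le_one hD).2 (le_max_left _ _))
  · refine lnp_le_of_le_max_one (by positivity) ?_
    rw [← max_div_div_right hL.le]
    exact max_le_max le_rfl ((div_le_one hL).2 (min_le_right _ _))

theorem intervalIntegral_le_of_le_logProfile {m : ℝ} (hm : m < -1) (n : ℕ) {f : ℝ → ℝ}
    {a₀ a₁ B c : ℝ} (ha₀ : 0 ≤ a₀) (ha₁ : a₀ ≤ a₁) (hB : 0 < B) (hc : 0 ≤ c)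
    (hf_nonneg : ∀ x ∈ Ioc a₀ a₁, 0 ≤ f x)
    (hf_le : ∀ x ∈ Ioc a₀ a₁, f x ≤ c * B ^ m * logProfile m n (x / B)) :
    ∫ x in a₀..a₁, f x ≤ c * B ^ (m + 1) * ∫ t in Ioi 0, logProfile m n t := by
  have hg : IntegrableOn (fun x => c * B ^ m * logProfile m n (x / B)) (Ioi 0) :=
    (integrableOn_logProfile_comp_div hm n hB).const_mul _
  have hsub : Ioc a₀ a₁ ⊆ Ioi 0 := fun x hx => ha₀.trans_lt hx.1
  calc ∫ x in a₀..a₁, f x = ∫ x in Ioc a₀ a₁, f x := intervalIntegral.integral_of_le ha₁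
    _ ≤ ∫ x in Ioc a₀ a₁, c * B ^ m * logProfile m n (x / B) :=
        integral_mono_of_nonneg (ae_restrict_of_forall_mem measurableSet_Ioc hf_nonneg)
          (hg.mono_set hsub) (ae_restrict_of_forall_mem measurableSet_Ioc hf_le)
    _ ≤ ∫ x in Ioi 0, c * B ^ m * logProfile m n (x / B) :=
        setIntegral_mono_set hg (ae_of_all _ fun x =>
          mul_nonneg (mul_nonneg hc (rpow_nonneg hB.le _)) (logProfile_nonneg ..))
          (Filter.Eventually.of_forall hsub)
    _ = c * B ^ (m + 1) * ∫ t in Ioi 0, logProfile m n t := by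
        rw [integral_const_mul, integral_logProfile_comp_div _ _ hB, rpow_add_one hB.ne']
        ring

/-- Lemma (Λ integration): for `m < −1`, `k, l : ℕ`, there is a polynomial `P` in two variables
with nonnegative coefficients (depending on `m, k, l`) such that for all `A, K ≥ 0`, `L > 0`,
`0 < a₀ ≤ a₁`,
`∫_{a₀}^{a₁} max(A,x)^m (ln₊(K/x))^k (ln₊(x/L))^l dx
  ≤ max(A,a₀)^{m+1} · P(ln₊(max(K,A)/max(a₀, min(A,L))), ln₊(a₀/L))`. -/
theorem lambda_integration (m : ℝ) (hm : m < -1) (k l : ℕ) :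
    ∃ P : MvPolynomial (Fin 2) ℝ, (∀ d, 0 ≤ P.coeff d) ∧
      ∀ A K L a₀ a₁ : ℝ, 0 ≤ A → 0 ≤ K → 0 < L → 0 < a₀ → a₀ ≤ a₁ →
        (∫ x in a₀..a₁, (max A x) ^ m * (lnp (K / x)) ^ k * (lnp (x / L)) ^ l)
          ≤ (max A a₀) ^ (m + 1) *
            MvPolynomial.eval ![lnp (max K A / max a₀ (min A L)), lnp (a₀ / L)] P := by
  set I := ∫ t in Ioi 0, logProfile m (k + l) t
  have hI : 0 ≤ I := setIntegral_nonneg measurableSet_Ioi fun t _ => logProfile_nonneg m _ t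
  refine ⟨MvPolynomial.C I * (1 + MvPolynomial.X 0 + MvPolynomial.X 1) ^ (k + l), fun d => ?_, ?_⟩
  · exact mul_mem (MvPolynomial.C_mem_nonnegCoeffs hI) (pow_mem (add_mem (add_mem (one_mem _)
      (MvPolynomial.X_mem_nonnegCoeffs 0)) (MvPolynomial.X_mem_nonnegCoeffs 1)) _) d
  intro A K L a₀ a₁ _ hK hL ha₀ ha₁
  set B := max A a₀
  set S := lnp (max K A / max a₀ (min A L)) + lnp (a₀ / L)
  have hB : 0 < B := ha₀.trans_le (le_max_right _ _)
  have hS : 0 ≤ S := add_nonneg (lnp_nonneg _) (lnp_nonneg _)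
  have hmax : ∀ x, a₀ ≤ x → max A x = max B x := fun x hx => by
    rw [max_assoc, max_eq_right hx]
  have key := intervalIntegral_le_of_le_logProfile hm (k + l) ha₀.le ha₁ hB
    (c := (1 + S) ^ (k + l)) (by positivity)
    (f := fun x => max A x ^ m * lnp (K / x) ^ k * lnp (x / L) ^ l)
    (fun x hx => by
      have : 0 ≤ max A x ^ m := rpow_nonneg ((ha₀.trans hx.1).le.trans (le_max_right _ _)) _
      exact mul_nonneg (mul_nonneg this (pow_nonneg (lnp_nonneg _) _))
        (pow_nonneg (lnp_nonneg _) _))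
    (fun x hx => by
      rw [hmax x hx.1.le]
      exact max_rpow_mul_lnp_pow_mul_lnp_pow_le m k l hB
        ((lnp_div_max_le hK ha₀).trans (le_add_of_nonneg_right (lnp_nonneg _)))
        (lnp_max_div_le hL ha₀))
  refine key.trans_eq ?_
  simp only [map_mul, map_pow, map_add, map_one, MvPolynomial.eval_C, MvPolynomial.eval_X,
    Matrix.cons_val_zero, Matrix.cons_val_one, Matrix.cons_val_fin_one, S, I, add_assoc]
  ring
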